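/- Let G be a simple graph, u, t vertices, and S ⊆ N(u) a set such that removing S from G disconnects u from t, and such that every vertex of N(u) \ S can reach t in G \ (S ∪ {u}) only through vertices of S. Then no chordless u-t path of G starts with an edge uw for w ∈ N(u) \ S. -/

import Mathlib

open SimpleGraph

variable {V : Type*}

/-- `l` is a (simple) path in `G`, given as its list of vertices. -/
def IsPathL (G : SimpleGraph V) (l : List V) : Prop :=
  l.Chain' G.Adj ∧ l.Nodup

/-- `l` is an `s`-`t` path in `G`. -/
def IsStPathL (G : SimpleGraph V) (s t : V) (l : List V) : Prop :=
  IsPathL G l ∧ l.head? = some s ∧ l.getLast? = some t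

/-- No two non-consecutive vertices of `l` are adjacent in `G`. -/
def NoChord (G : SimpleGraph V) (l : List V) : Prop :=
  ∀ (i j : ℕ) (hi : i < l.length) (hj : j < l.length), i + 1 < j →
    ¬ G.Adj (l.get ⟨i, hi⟩) (l.get ⟨j, hj⟩)

/-- `l` is a chordless (induced) `s`-`t` path in `G`. -/
def IsChordlessStPathL (G : SimpleGraph V) (s t : V) (l : List V) : Prop :=
  IsStPathL G s t l ∧ NoChord G l

/-- `l` is a cycle in `G`: at least 3 distinct vertices, each cyclically consecutive pair
adjacent. -/
def IsCycleL (G : SimpleGraph V) (l : List V) : Prop :=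
  3 ≤ l.length ∧ l.Nodup ∧
    ∀ (i : ℕ) (hi : i < l.length),
      G.Adj (l.get ⟨i, hi⟩) (l.get ⟨(i + 1) % l.length, Nat.mod_lt _ (by omega)⟩)

/-- `l` is a chordless (induced) cycle in `G`: a cycle such that any two adjacent vertices on
it are cyclically consecutive. -/
def IsChordlessCycleL (G : SimpleGraph V) (l : List V) : Prop :=
  IsCycleL G l ∧
    ∀ (i j : ℕ) (hi : i < l.length) (hj : j < l.length),
      G.Adj (l.get ⟨i, hi⟩) (l.get ⟨j, hj⟩) →
        (i + 1) % l.length = j ∨ (j + 1) % l.length = i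

/-- The subgraph of `G` induced by the complement of `R` (vertices of `R` deleted), kept on
the same vertex type. -/
def delSet (G : SimpleGraph V) (R : Set V) : SimpleGraph V where
  Adj a b := G.Adj a b ∧ a ∉ R ∧ b ∉ R
  symm := ⟨fun _ _ ⟨h, ha, hb⟩ => ⟨h.symm, hb, ha⟩⟩
  loopless := ⟨fun _ ⟨h, _, _⟩ => G.irrefl h⟩

/-!
The tail `w :: l'` of a `u`-`t` path `u :: w :: l'` is a `w`-`t` path avoiding `u`, so by
hypothesis it meets `S` in some `x ≠ w`. Then `x` sits at distance at least two from `u` along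
the path, while `x ∈ S ⊆ N(u)`: the edge `ux` is a chord.
-/

theorem IsPathL.delSet {G : SimpleGraph V} {R : Set V} {l : List V} (hl : IsPathL G l)
    (hR : ∀ x ∈ l, x ∉ R) : IsPathL (delSet G R) l :=
  ⟨hl.1.imp_of_mem_imp fun a b ha hb hab => ⟨hab, hR a ha, hR b hb⟩, hl.2⟩

theorem IsStPathL.tail_delSet_singleton {G : SimpleGraph V} {u w t : V} {l : List V}
    (hl : IsStPathL G u t (u :: w :: l)) : IsStPathL (delSet G {u}) w t (w :: l) := by
  obtain ⟨⟨hchain, hnodup⟩, -, hlast⟩ := hl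
  rw [List.nodup_cons] at hnodup
  refine ⟨IsPathL.delSet ⟨hchain.tail, hnodup.2⟩ ?_, rfl, ?_⟩
  · rintro x hx rfl
    exact hnodup.1 hx
  · rwa [List.getLast?_cons_cons] at hlast

theorem NoChord.not_adj_of_mem {G : SimpleGraph V} {u w x : V} {l : List V}
    (h : NoChord G (u :: w :: l)) (hx : x ∈ l) : ¬ G.Adj u x := by
  obtain ⟨k, hk, rfl⟩ := List.getElem_of_mem hx
  exact h 0 (k + 2) (by simp) (by simp; omega) (by omega)

theorem List.exists_eq_cons_cons_of_head?_of_getElem?_one {α : Type*} {l : List α} {a b : α}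
    (h0 : l.head? = some a) (h1 : l[1]? = some b) : ∃ l', l = a :: b :: l' := by
  match l, h0, h1 with
  | _ :: _ :: l', rfl, rfl => exact ⟨l', rfl⟩

theorem stmt13_general (G : SimpleGraph V) (u t : V) (S : Set V)
    (hS : S ⊆ G.neighborSet u)
    (hcut : ∀ w : V, G.Adj u w → w ∉ S →
      ∀ q : List V, IsStPathL (delSet G ({u} : Set V)) w t q → ∃ x ∈ S, x ∈ q) :
    ∀ w : V, G.Adj u w → w ∉ S →
      ¬ ∃ l : List V, IsChordlessStPathL G u t l ∧ l[1]? = some w := by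
  rintro w huw hwS ⟨l, ⟨hpath, hnc⟩, hw⟩
  obtain ⟨l', rfl⟩ := List.exists_eq_cons_cons_of_head?_of_getElem?_one hpath.2.1 hw
  obtain ⟨x, hxS, hx⟩ := hcut w huw hwS _ hpath.tail_delSet_singleton
  have hxl' : x ∈ l' := (List.mem_cons.mp hx).resolve_left (by rintro rfl; exact hwS hxS)
  exact hnc.not_adj_of_mem hxl' (hS hxS)

/-- Completeness half of the cleanup lemma: if `S ⊆ N(u)` disconnects `u` from `t`, and every
vertex of `N(u) \ S` can reach `t` in `G \ u` only through vertices of `S`, then no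
chordless `u`-`t` path of `G` starts with an edge `uw` for `w ∈ N(u) \ S`. -/
theorem stmt13 (G : SimpleGraph V) (u t : V) (S : Set V)
    (hS : S ⊆ G.neighborSet u)
    (hdisc : ¬ ∃ q : List V, IsStPathL (delSet G S) u t q)
    (hcut : ∀ w : V, G.Adj u w → w ∉ S →
      ∀ q : List V, IsStPathL (delSet G ({u} : Set V)) w t q → ∃ x ∈ S, x ∈ q) :
    ∀ w : V, G.Adj u w → w ∉ S →
      ¬ ∃ l : List V, IsChordlessStPathL G u t l ∧ l[1]? = some w :=
  stmt13_general G u t S hS hcut
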